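/- For all real numbers t, s ≥ 0, one has (t + s)(sinh t + sinh s) ≥ 4 (sinh(t/2) + sinh(s/2))². Equivalently, with φ(u) = e^u − e^{−u}, G(u) = e^{u/2} − e^{−u/2} and c_φ = 2: c_φ^{−1}(t+s)(φ(t)+φ(s)) ≥ (G(t)+G(s))². -/
import Mathlib

open Real

lemma sinh_le_mul_cosh (x : ℝ) (hx : 0 ≤ x) : Real.sinh x ≤ x * Real.cosh x := by
  have h : MonotoneOn (fun y : ℝ => y * Real.cosh y - Real.sinh y) (Set.Ici 0) := by
    apply monotoneOn_of_deriv_nonneg (convex_Ici 0)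
    · exact ((continuous_id.mul Real.continuous_cosh).sub Real.continuous_sinh).continuousOn
    · intro y hy
      exact (((hasDerivAt_id y).mul (Real.hasDerivAt_cosh y)).sub
        (Real.hasDerivAt_sinh y)).differentiableAt.differentiableWithinAt
    · intro y hy
      rw [interior_Ici, Set.mem_Ioi] at hy
      have : HasDerivAt (fun y : ℝ => y * Real.cosh y - Real.sinh y)
          (1 * Real.cosh y + y * Real.sinh y - Real.cosh y) y :=
        ((hasDerivAt_id y).mul (Real.hasDerivAt_cosh y)).sub (Real.hasDerivAt_sinh y)
      rw [this.deriv]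
      have := Real.sinh_nonneg_iff.2 hy.le
      nlinarith
  have h0 := h (Set.self_mem_Ici) (Set.mem_Ici.2 hx) hx
  simp at h0
  linarith

/-- For all `t, s ≥ 0`: `(t + s)(sinh t + sinh s) ≥ 4 (sinh(t/2) + sinh(s/2))²`. -/
theorem stmt_14 (t s : ℝ) (ht : 0 ≤ t) (hs : 0 ≤ s) :
    4 * (Real.sinh (t / 2) + Real.sinh (s / 2)) ^ 2 ≤
      (t + s) * (Real.sinh t + Real.sinh s) := by
  set a := Real.sinh (t / 2) with ha
  set b := Real.sinh (s / 2) with hb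
  set c := Real.cosh (t / 2) with hc
  set d := Real.cosh (s / 2) with hd
  have ha0 : 0 ≤ a := Real.sinh_nonneg_iff.2 (by linarith)
  have hb0 : 0 ≤ b := Real.sinh_nonneg_iff.2 (by linarith)
  have hc1 : 1 ≤ c := Real.one_le_cosh _
  have hd1 : 1 ≤ d := Real.one_le_cosh _
  have h1 : 2 * a ≤ t * c := by
    have := sinh_le_mul_cosh (t / 2) (by linarith)
    rw [← ha, ← hc] at this; linarith
  have h2 : 2 * b ≤ s * d := by
    have := sinh_le_mul_cosh (s / 2) (by linarith)
    rw [← hb, ← hd] at this; linarith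
  have hst : Real.sinh t = 2 * a * c := by
    rw [ha, hc, ← Real.sinh_two_mul]; ring_nf
  have hss : Real.sinh s = 2 * b * d := by
    rw [hb, hd, ← Real.sinh_two_mul]; ring_nf
  rw [hst, hss]
  have hc0 : (0:ℝ) < c := lt_of_lt_of_le one_pos hc1
  have hd0 : (0:ℝ) < d := lt_of_lt_of_le one_pos hd1
  have hq : 0 ≤ 2 * a * c + 2 * b * d := by nlinarith
  have e1 : 2 * a * (d * (2 * a * c + 2 * b * d)) ≤ t * c * (d * (2 * a * c + 2 * b * d)) :=
    mul_le_mul_of_nonneg_right h1 (mul_nonneg hd0.le hq)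
  have e2 : 2 * b * (c * (2 * a * c + 2 * b * d)) ≤ s * d * (c * (2 * a * c + 2 * b * d)) :=
    mul_le_mul_of_nonneg_right h2 (mul_nonneg hc0.le hq)
  have e3 : 0 ≤ a * b * (c - d) ^ 2 := mul_nonneg (mul_nonneg ha0 hb0) (sq_nonneg _)
  have hcd : (0:ℝ) < c * d := mul_pos hc0 hd0
  have key : c * d * (4 * (a + b) ^ 2) ≤ c * d * ((t + s) * (2 * a * c + 2 * b * d)) := by
    nlinarith [e1, e2, e3]
  exact le_of_mul_le_mul_left key hcd
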